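/- arXiv:1504.01143 — 4 statements merged into one kernel-verified Lean document; each statement's English description precedes it below -/
import Mathlib

section
/- If W is a double occurrence word and W' is obtained from W by reversing the subword strictly between the two occurrences of a letter v, then the interlacement graph of W' equals the local complement of the interlacement graph of W at v. Consequently, if G is a circle graph then so is G^v. -/
open SimpleGraph

/-- Two letters are interlaced in a word if their occurrences alternate. -/
def Interlaced {α : Type} [DecidableEq α] (W : List α) (a b : α) : Prop :=
  W.filter (fun x => x == a || x == b) = [a, b, a, b] ∨
  W.filter (fun x => x == a || x == b) = [b, a, b, a]

/-- The interlacement graph of a word. -/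
def interlacementGraph {α : Type} [DecidableEq α] (W : List α) : SimpleGraph α where
  Adj a b := a ≠ b ∧ (Interlaced W a b ∨ Interlaced W b a)
  symm := ⟨fun a b h => ⟨h.1.symm, h.2.symm⟩⟩
  loopless := ⟨fun a h => h.1 rfl⟩

/-- A double occurrence word: each letter of the alphabet occurs exactly twice. -/
def IsDOW {α : Type} [DecidableEq α] (W : List α) : Prop := ∀ a : α, W.count a = 2

/-- A circle graph: a graph isomorphic to the interlacement graph of a
double occurrence word. -/
def IsCircleGraph {V : Type} (G : SimpleGraph V) : Prop :=
  ∃ (n : ℕ) (W : List (Fin n)), IsDOW W ∧ Nonempty (G ≃g interlacementGraph W)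

/-- Local complementation at a vertex `v`: toggle adjacency inside `N(v)`. -/
def localComplement {V : Type} (G : SimpleGraph V) (v : V) : SimpleGraph V where
  Adj x y := x ≠ y ∧ ((G.Adj v x ∧ G.Adj v y ∧ ¬ G.Adj x y) ∨
    (¬ (G.Adj v x ∧ G.Adj v y) ∧ G.Adj x y))
  symm := by
    constructor
    rintro x y ⟨hxy, h | h⟩
    · exact ⟨hxy.symm, Or.inl ⟨h.2.1, h.1, fun hc => h.2.2 hc.symm⟩⟩
    · exact ⟨hxy.symm, Or.inr ⟨fun hc => h.1 ⟨hc.2, hc.1⟩, h.2.symm⟩⟩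
  loopless := ⟨fun x h => h.1 rfl⟩

/-- A split `(V1, X1; V2, X2)` of a graph. -/
def IsSplit {V : Type} (G : SimpleGraph V) (V1 X1 V2 X2 : Set V) : Prop :=
  V1 ∪ V2 = Set.univ ∧ Disjoint V1 V2 ∧ 2 ≤ V1.encard ∧ 2 ≤ V2.encard ∧
  X1 ⊆ V1 ∧ X2 ⊆ V2 ∧ ∀ x ∈ V1, ∀ y ∈ V2, (G.Adj x y ↔ x ∈ X1 ∧ y ∈ X2)

/-- A graph has a split. -/
def HasSplit {V : Type} (G : SimpleGraph V) : Prop :=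
  ∃ V1 X1 V2 X2, IsSplit G V1 X1 V2 X2

/-- Twin vertices: same neighbours outside `{u, v}`. -/
def IsTwinPair {V : Type} (G : SimpleGraph V) (u v : V) : Prop :=
  u ≠ v ∧ G.neighborSet u \ {v} = G.neighborSet v \ {u}

/-- Adjacent twins. -/
def AdjacentTwins {V : Type} (G : SimpleGraph V) (u v : V) : Prop :=
  G.Adj u v ∧ G.neighborSet u \ {v} = G.neighborSet v \ {u}

/-- Nonadjacent twins. -/
def NonadjacentTwins {V : Type} (G : SimpleGraph V) (u v : V) : Prop :=
  u ≠ v ∧ ¬ G.Adj u v ∧ G.neighborSet u = G.neighborSet v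

/-- Delete a vertex: keep the vertex set, remove all edges at `v`. -/
def deleteVertex {V : Type} (G : SimpleGraph V) (v : V) : SimpleGraph V where
  Adj x y := G.Adj x y ∧ x ≠ v ∧ y ≠ v
  symm := ⟨fun x y h => ⟨h.1.symm, h.2.2, h.2.1⟩⟩
  loopless := ⟨fun x h => G.loopless.irrefl x h.1⟩

/-- `v` is a cutpoint of the connected graph `G`. -/
def IsCutpoint {V : Type} (G : SimpleGraph V) (v : V) : Prop :=
  G.Connected ∧ ∃ x y : V, x ≠ v ∧ y ≠ v ∧ ¬ (deleteVertex G v).Reachable x y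

/-- Cyclic equivalence of words: generated by rotations and reversals. -/
inductive CyclicEquiv {β : Type} : List β → List β → Prop
  | refl (l : List β) : CyclicEquiv l l
  | rot (l₁ l₂ : List β) : CyclicEquiv (l₁ ++ l₂) (l₂ ++ l₁)
  | rev (l : List β) : CyclicEquiv l l.reverse
  | symm {l₁ l₂ : List β} : CyclicEquiv l₁ l₂ → CyclicEquiv l₂ l₁
  | trans {l₁ l₂ l₃ : List β} : CyclicEquiv l₁ l₂ → CyclicEquiv l₂ l₃ → CyclicEquiv l₁ l₃

/-- `G` is 3-connected: more than 3 vertices, and removing fewer than 3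
vertices leaves it connected. -/
def ThreeConnected {V : Type} [Fintype V] (G : SimpleGraph V) : Prop :=
  3 < Fintype.card V ∧ ∀ K : Set V, K.ncard < 3 → (G.induce (Kᶜ : Set V)).Connected

/-- The disjoint union of two graphs, joined by a single edge from `a` to `b`. -/
def joinedByEdge {V₁ V₂ : Type} (G₁ : SimpleGraph V₁) (G₂ : SimpleGraph V₂)
    (a : V₁) (b : V₂) : SimpleGraph (V₁ ⊕ V₂) where
  Adj x y :=
    Sum.elim (fun u => Sum.elim (fun w => G₁.Adj u w) (fun w => u = a ∧ w = b) y)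
             (fun u => Sum.elim (fun w => u = b ∧ w = a) (fun w => G₂.Adj u w) y) x
  symm := by
    constructor
    rintro (u | u) (w | w) h
    · exact h.symm
    · exact ⟨h.2, h.1⟩
    · exact ⟨h.2, h.1⟩
    · exact h.symm
  loopless := by
    constructor
    rintro (u | u) h
    · exact G₁.loopless.irrefl u h
    · exact G₂.loopless.irrefl u h

/-!
For letters `x ≠ y` other than `v`, the two occurrences of `v` do not affect whether `x` and `y`
interlace, so only the restriction of the word to `{x, y}` matters. Encoded over `Bool` it is a
word of length four cut into three blocks, and a finite check shows that reversing the middle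
block toggles alternation exactly when that block contains one `x` and one `y`. A letter is
interlaced with `v` iff exactly one of its occurrences lies between the two `v`'s, which the
reversal does not change; so the middle block contains one `x` and one `y` exactly when both are
neighbours of `v`. Every vertex of the interlacement graph of a double occurrence word cuts it as
`A v B v C`, which gives closure of circle graphs under local complementation.
-/

section LocalComplement

variable {V : Type} (G : SimpleGraph V) (v : V)

theorem localComplement_adj_left_iff (y : V) : (localComplement G v).Adj v y ↔ G.Adj v y := by
  simp only [localComplement, SimpleGraph.irrefl, false_and, not_false_eq_true,
    true_and, false_or]
  exact and_iff_right_of_imp G.ne_of_adj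

theorem localComplement_adj_of_ne {x y : V} (hxy : x ≠ y) :
    (localComplement G v).Adj x y ↔ Xor (G.Adj v x ∧ G.Adj v y) (G.Adj x y) := by
  simp only [localComplement, Xor, and_assoc, and_comm (a := ¬(G.Adj v x ∧ G.Adj v y))]
  exact and_iff_right hxy

end LocalComplement

def SimpleGraph.Iso.localComplement {V W : Type} {G : SimpleGraph V} {H : SimpleGraph W}
    (e : G ≃g H) (u : V) : _root_.localComplement G u ≃g _root_.localComplement H (e u) where
  toEquiv := e.toEquiv
  map_rel_iff' {a b} := by
    change (_root_.localComplement H (e u)).Adj (e a) (e b) ↔ _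
    simp only [_root_.localComplement, e.map_adj_iff, ne_eq, e.injective.eq_iff]

section Interlacement

variable {α : Type} [DecidableEq α]

theorem interlaced_comm (W : List α) (a b : α) : Interlaced W a b ↔ Interlaced W b a := by
  have : W.filter (fun z => z == b || z == a) = W.filter (fun z => z == a || z == b) :=
    List.filter_congr fun _ _ => Bool.or_comm _ _
  rw [Interlaced, Interlaced, this, or_comm]

theorem interlacementGraph_adj_iff (W : List α) (a b : α) :
    (interlacementGraph W).Adj a b ↔ a ≠ b ∧ Interlaced W a b := by
  show a ≠ b ∧ (Interlaced W a b ∨ Interlaced W b a) ↔ _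
  rw [interlaced_comm W b a, or_self]

theorem interlaced_append_cons_append_cons_of_ne {x y v : α} (hx : x ≠ v) (hy : y ≠ v)
    (A B C : List α) :
    Interlaced (A ++ v :: (B ++ v :: C)) x y ↔ Interlaced (A ++ B ++ C) x y := by
  have hv : (v == x || v == y) = false := by simp [hx.symm, hy.symm]
  simp only [Interlaced, List.filter_append, List.filter_cons, hv, List.append_assoc]
  rfl

theorem filter_eq_replicate_of_not_mem {l : List α} {v : α} (hv : v ∉ l) (a : α) :
    l.filter (fun z => z == v || z == a) = List.replicate (l.count a) a := by
  rw [← List.filter_beq]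
  refine List.filter_congr fun z hz => ?_
  simp [show z ≠ v from fun h => hv (h ▸ hz)]

theorem ne_of_count_eq_two {l : List α} {v a : α} (hv : v ∉ l) (ha : l.count a = 2) :
    a ≠ v := by
  rintro rfl
  simp [List.count_eq_zero_of_not_mem hv] at ha

theorem interlaced_append_cons_append_cons_left_iff {A B C : List α} {v a : α}
    (hv : v ∉ A ++ B ++ C) (ha : (A ++ B ++ C).count a = 2) :
    Interlaced (A ++ v :: (B ++ v :: C)) v a ↔ B.count a = 1 := by
  have hav := ne_of_count_eq_two hv ha
  simp only [List.mem_append, not_or] at hv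
  simp only [Interlaced, List.filter_append, List.filter_cons, beq_self_eq_true, Bool.true_or,
    if_true, filter_eq_replicate_of_not_mem hv.1.1, filter_eq_replicate_of_not_mem hv.1.2,
    filter_eq_replicate_of_not_mem hv.2]
  simp only [List.count_append] at ha
  generalize A.count a = nA, B.count a = nB, C.count a = nC at ha ⊢
  have : nA ≤ 2 := by omega
  have : nB ≤ 2 := by omega
  have : nC ≤ 2 := by omega
  interval_cases nA <;> interval_cases nB <;> interval_cases nC <;>
    first | omega | simp [List.replicate, hav, hav.symm]

theorem interlacementGraph_adj_left_iff {A B C : List α} {v a : α}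
    (hv : v ∉ A ++ B ++ C) (ha : (A ++ B ++ C).count a = 2) :
    (interlacementGraph (A ++ v :: (B ++ v :: C))).Adj v a ↔ B.count a = 1 := by
  rw [interlacementGraph_adj_iff, interlaced_append_cons_append_cons_left_iff hv ha,
    and_iff_right (ne_of_count_eq_two hv ha).symm]

theorem interlaced_bool_iff (L : List Bool) :
    Interlaced L true false ↔
      L = [true, false, true, false] ∨ L = [false, true, false, true] := by
  simp [Interlaced]

set_option synthInstance.maxSize 1000 in
theorem interlaced_append_reverse_append_bool (P Q R : List Bool)
    (ht : (P ++ Q ++ R).count true = 2) (hf : (P ++ Q ++ R).count false = 2) :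
    Interlaced (P ++ Q.reverse ++ R) true false ↔
      Xor (Q.count true = 1 ∧ Q.count false = 1) (Interlaced (P ++ Q ++ R) true false) := by
  obtain ⟨b₁, b₂, b₃, b₄, hw⟩ := List.length_eq_four.mp <| by
    rw [← List.count_true_add_count_false, ht, hf]
  -- `i` and `k` are the lengths of the first and the middle block
  have key : ∀ a b c d : Bool, ∀ i < 5, ∀ k < 5, i + k ≤ 4 →
      [a, b, c, d].count true = 2 → [a, b, c, d].count false = 2 →
      (Interlaced ([a, b, c, d].take i ++ (([a, b, c, d].drop i).take k).reverse ++
          ([a, b, c, d].drop i).drop k) true false ↔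
        Xor ((([a, b, c, d].drop i).take k).count true = 1 ∧
          (([a, b, c, d].drop i).take k).count false = 1)
        (Interlaced [a, b, c, d] true false)) := by
    simp only [interlaced_bool_iff]
    decide
  have hlen := congrArg List.length hw
  simp only [List.length_append, List.length_cons, List.length_nil] at hlen
  have := key b₁ b₂ b₃ b₄ P.length (by omega) Q.length (by omega) (by omega)
    (hw ▸ ht) (hw ▸ hf)
  simpa only [← hw, List.append_assoc, List.take_left', List.drop_left', List.take_left,
    List.drop_left] using this

def boolTrace (x y : α) (l : List α) : List Bool :=
  (l.filter (fun z => z == x || z == y)).map (· == x)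

@[simp]
theorem boolTrace_append (x y : α) (l₁ l₂ : List α) :
    boolTrace x y (l₁ ++ l₂) = boolTrace x y l₁ ++ boolTrace x y l₂ := by
  simp [boolTrace]

@[simp]
theorem boolTrace_reverse (x y : α) (l : List α) :
    boolTrace x y l.reverse = (boolTrace x y l).reverse := by
  simp [boolTrace, List.filter_reverse]

theorem eq_or_eq_of_mem_filter {x y z : α} {l : List α}
    (hz : z ∈ l.filter (fun z => z == x || z == y)) : z = x ∨ z = y := by
  simpa using (List.mem_filter.mp hz).2

theorem count_true_boolTrace (x y : α) (l : List α) :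
    (boolTrace x y l).count true = l.count x := by
  rw [boolTrace, ← List.count_filter (p := fun z => z == x || z == y) (by simp)]
  simp [List.count, List.countP_map, Function.comp_def]

theorem count_false_boolTrace {x y : α} (hxy : x ≠ y) (l : List α) :
    (boolTrace x y l).count false = l.count y := by
  rw [boolTrace, ← List.count_filter (p := fun z => z == x || z == y) (by simp)]
  simp only [List.count, List.countP_map]
  refine List.countP_congr fun z hz => ?_
  rcases eq_or_eq_of_mem_filter hz with rfl | rfl <;> simp [hxy, hxy.symm]

theorem interlaced_iff_boolTrace {x y : α} (hxy : x ≠ y) (l : List α) :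
    Interlaced l x y ↔ Interlaced (boolTrace x y l) true false := by
  have hdecode : l.filter (fun z => z == x || z == y) = (boolTrace x y l).map (cond · x y) := by
    rw [boolTrace, List.map_map]
    conv_lhs => rw [← List.map_id (l.filter _)]
    refine List.map_congr_left fun z hz => ?_
    rcases eq_or_eq_of_mem_filter hz with rfl | rfl <;> simp [beq_eq_false_iff_ne.mpr hxy.symm]
  have hinj : Function.Injective (List.map (cond · x y)) := by
    refine List.map_injective_iff.mpr fun b c h => ?_
    cases b <;> cases c <;> simp_all
  rw [interlaced_bool_iff, Interlaced, hdecode]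
  exact or_congr (hinj.eq_iff (b := [true, false, true, false]))
    (hinj.eq_iff (b := [false, true, false, true]))

theorem interlaced_append_reverse_append_iff {x y : α} (hxy : x ≠ y) {A B C : List α}
    (hx : (A ++ B ++ C).count x = 2) (hy : (A ++ B ++ C).count y = 2) :
    Interlaced (A ++ B.reverse ++ C) x y ↔
      Xor (B.count x = 1 ∧ B.count y = 1) (Interlaced (A ++ B ++ C) x y) := by
  rw [← count_true_boolTrace x y] at hx ⊢
  rw [← count_false_boolTrace hxy] at hy ⊢
  rw [interlaced_iff_boolTrace hxy, interlaced_iff_boolTrace hxy]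
  simp only [boolTrace_append, boolTrace_reverse] at hx hy ⊢
  exact interlaced_append_reverse_append_bool _ _ _ hx hy

theorem IsDOW.not_mem_and_count_eq_two {A B C : List α} {v : α}
    (hW : IsDOW (A ++ v :: (B ++ v :: C))) :
    v ∉ A ++ B ++ C ∧ ∀ z ≠ v, (A ++ B ++ C).count z = 2 := by
  have hcount z : (A ++ B ++ C).count z + (if v = z then 2 else 0) = 2 := by
    have := hW z
    simp only [List.count_append, List.count_cons, beq_iff_eq] at this ⊢
    split_ifs at this ⊢ <;> omega
  refine ⟨List.count_eq_zero.mp (by simpa using hcount v), fun z hz => ?_⟩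
  simpa [Ne.symm hz] using hcount z

theorem isDOW_reverse_between {A B C : List α} {v : α} (hW : IsDOW (A ++ v :: (B ++ v :: C))) :
    IsDOW (A ++ v :: (B.reverse ++ v :: C)) := fun z =>
  (((List.reverse_perm B).append_right _).cons v |>.append_left A).count_eq z ▸ hW z

theorem interlacementGraph_reverse_between {A B C : List α} {v : α}
    (hW : IsDOW (A ++ v :: (B ++ v :: C))) :
    interlacementGraph (A ++ v :: (B.reverse ++ v :: C)) =
      localComplement (interlacementGraph (A ++ v :: (B ++ v :: C))) v := by
  obtain ⟨hv, h2⟩ := hW.not_mem_and_count_eq_two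
  obtain ⟨hv', h2'⟩ := (isDOW_reverse_between hW).not_mem_and_count_eq_two
  have hleft : ∀ z, (interlacementGraph (A ++ v :: (B.reverse ++ v :: C))).Adj v z ↔
      (localComplement (interlacementGraph (A ++ v :: (B ++ v :: C))) v).Adj v z := fun z => by
    rcases eq_or_ne z v with rfl | hz
    · simp
    rw [localComplement_adj_left_iff, interlacementGraph_adj_left_iff hv (h2 z hz),
      interlacementGraph_adj_left_iff hv' (h2' z hz), List.count_reverse]
  ext x y
  rcases eq_or_ne x v with rfl | hx
  · exact hleft y
  rcases eq_or_ne y v with rfl | hy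
  · rw [SimpleGraph.adj_comm, SimpleGraph.adj_comm (localComplement _ _)]
    exact hleft x
  rcases eq_or_ne x y with rfl | hxy
  · simp
  rw [localComplement_adj_of_ne _ _ hxy, interlacementGraph_adj_left_iff hv (h2 x hx),
    interlacementGraph_adj_left_iff hv (h2 y hy), interlacementGraph_adj_iff,
    interlacementGraph_adj_iff, interlaced_append_cons_append_cons_of_ne hx hy,
    interlaced_append_cons_append_cons_of_ne hx hy,
    interlaced_append_reverse_append_iff hxy (h2 x hx) (h2 y hy)]
  simp only [ne_eq, hxy, not_false_eq_true, true_and]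

theorem exists_eq_append_cons_append_cons {W : List α} {v : α} (h : W.count v = 2) :
    ∃ A B C, W = A ++ v :: (B ++ v :: C) := by
  obtain ⟨A, t, rfl, hA⟩ := List.eq_append_cons_of_mem
    (List.count_pos_iff.mp (by omega : 0 < W.count v))
  have : t.count v = 1 := by
    simp [List.count_append, List.count_eq_zero_of_not_mem hA] at h
    omega
  obtain ⟨B, C, rfl⟩ := List.append_of_mem (List.count_pos_iff.mp (by omega : 0 < t.count v))
  exact ⟨A, B, C, rfl⟩

end Interlacement

theorem IsCircleGraph.localComplement {V : Type} {G : SimpleGraph V} (hG : IsCircleGraph G)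
    (u : V) : IsCircleGraph (localComplement G u) := by
  obtain ⟨n, W, hW, ⟨e⟩⟩ := hG
  obtain ⟨v, hv⟩ : ∃ v, e u = v := ⟨_, rfl⟩
  obtain ⟨A, B, C, rfl⟩ := exists_eq_append_cons_append_cons (hW v)
  refine ⟨n, A ++ v :: (B.reverse ++ v :: C), isDOW_reverse_between hW, ?_⟩
  rw [interlacementGraph_reverse_between hW]
  have e' := e.localComplement u
  rw [hv] at e'
  exact ⟨e'⟩

/-- Reversing the subword strictly between the two occurrences of `v` realizes
local complementation at `v`; consequently circle graphs are closed under
local complementation. -/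
theorem stmt1 {α : Type} [DecidableEq α] (A B C : List α) (v : α)
    (hW : IsDOW (A ++ v :: (B ++ v :: C))) :
    interlacementGraph (A ++ v :: (B.reverse ++ v :: C)) =
      localComplement (interlacementGraph (A ++ v :: (B ++ v :: C))) v ∧
    ∀ {V : Type} (G : SimpleGraph V) (u : V),
      IsCircleGraph G → IsCircleGraph (localComplement G u) :=
  ⟨interlacementGraph_reverse_between hW, fun _ u hG => hG.localComplement u⟩
end

section
/- If a simple graph G with at least 4 vertices has a cutpoint v, and H is a union of some but not all connected components of G - v with |V(H)| ≥ 2, then G has a split with V1 = V(H) and X2 = {v}. -/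
open SimpleGraph

namespace SimpleGraph

variable {V : Type} {G : SimpleGraph V} {v : V} {S : Set V}

lemma eq_of_adj_of_reachable_deleteVertex_closed (hvS : v ∉ S)
    (hclosed : ∀ x ∈ S, ∀ y, (deleteVertex G v).Reachable x y → y ∈ S)
    {x y : V} (hx : x ∈ S) (hy : y ∉ S) (hxy : G.Adj x y) : y = v := by
  by_contra hyv
  have hxv : x ≠ v := ne_of_mem_of_not_mem hx hvS
  exact hy (hclosed x hx y (Adj.reachable (G := deleteVertex G v) ⟨hxy, hxv, hyv⟩))

lemma isSplit_of_boundary_eq (hvS : v ∉ S)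
    (hboundary : ∀ x ∈ S, ∀ y ∉ S, G.Adj x y → y = v)
    (hS : 2 ≤ S.encard) (hSc : 2 ≤ Sᶜ.encard) :
    IsSplit G S {x | x ∈ S ∧ G.Adj x v} Sᶜ {v} := by
  refine ⟨Set.union_compl_self S, disjoint_compl_right, hS, hSc, fun x hx => hx.1,
    Set.singleton_subset_iff.mpr hvS, fun x hx y hy => ⟨fun hxy => ?_, ?_⟩⟩
  · obtain rfl := hboundary x hx y hy hxy
    exact ⟨⟨hx, hxy⟩, rfl⟩
  · rintro ⟨⟨-, hxv⟩, rfl⟩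
    exact hxv

end SimpleGraph

theorem stmt7_general {V : Type} (G : SimpleGraph V)
    (v : V) (S : Set V)
    (hvS : v ∉ S)
    (hclosed : ∀ x ∈ S, ∀ y : V, (deleteVertex G v).Reachable x y → y ∈ S)
    (hnall : ∃ y : V, y ≠ v ∧ y ∉ S)
    (hcard : 2 ≤ S.encard) :
    ∃ X₁ : Set V, IsSplit G S X₁ Sᶜ {v} := by
  obtain ⟨y, hyv, hyS⟩ := hnall
  have hSc : 2 ≤ Sᶜ.encard := by
    rw [← Set.encard_pair hyv]
    exact Set.encard_mono (Set.pair_subset hyS hvS)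
  exact ⟨_, isSplit_of_boundary_eq hvS
    (fun _ hx _ hy => eq_of_adj_of_reachable_deleteVertex_closed hvS hclosed hx hy) hcard hSc⟩

/-- A union `S` of some but not all connected components of `G - v`, where `v`
is a cutpoint, gives a split with `V1 = S` and `X2 = {v}`. -/
theorem stmt7 {V : Type} [Fintype V] (G : SimpleGraph V) (h4 : 4 ≤ Fintype.card V)
    (v : V) (hv : IsCutpoint G v) (S : Set V)
    (hvS : v ∉ S)
    (hclosed : ∀ x ∈ S, ∀ y : V, (deleteVertex G v).Reachable x y → y ∈ S)
    (hne : S.Nonempty)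
    (hnall : ∃ y : V, y ≠ v ∧ y ∉ S)
    (hcard : 2 ≤ S.encard) :
    ∃ X₁ : Set V, IsSplit G S X₁ Sᶜ {v} :=
  stmt7_general G v S hvS hclosed hnall hcard
end

section
/- In a 3-regular simple graph, if two pairs of adjacent twin vertices intersect (share a common vertex), then the three twin vertices together with their shared neighbor induce a 4-clique which forms an entire connected component of the graph. -/
open SimpleGraph

/-! Twinship transports neighbours: the third neighbour `x` of `u` is adjacent to `v`, hence to
`w`, so `u, v, w, x` form a 4-clique. In a cubic graph such a clique already uses all three edges
at each of its vertices, so nothing outside it is adjacent to it. -/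

namespace AdjacentTwins

variable {V : Type} {G : SimpleGraph V} {u v : V}

lemma symm (h : AdjacentTwins G u v) : AdjacentTwins G v u :=
  ⟨h.1.symm, h.2.symm⟩

lemma adj_of_adj {z : V} (h : AdjacentTwins G u v) (huz : G.Adj u z) (hzv : z ≠ v) :
    G.Adj v z :=
  (show z ∈ G.neighborSet v \ {u} from h.2 ▸ ⟨huz, hzv⟩).1

end AdjacentTwins

namespace SimpleGraph

variable {V : Type} [Fintype V] {G : SimpleGraph V} [DecidableRel G.Adj]

lemma exists_adj_notMem_of_card_lt_degree {u : V} {s : Finset V} (h : s.card < G.degree u) :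
    ∃ x, G.Adj u x ∧ x ∉ s := by
  classical
  obtain ⟨x, hx, hxs⟩ := Finset.exists_mem_notMem_of_card_lt_card h
  exact ⟨x, (G.mem_neighborFinset u x).1 hx, hxs⟩

lemma IsClique.mem_of_adj_of_degree_lt [DecidableEq V] {s : Finset V}
    (hs : G.IsClique (s : Set V)) {y z : V} (hy : y ∈ s) (hdeg : G.degree y < s.card)
    (hyz : G.Adj y z) : z ∈ s := by
  have hsub : s.erase y ⊆ G.neighborFinset y := fun a ha =>
    (G.mem_neighborFinset y a).2
      (hs hy (Finset.mem_of_mem_erase ha) (Finset.ne_of_mem_erase ha).symm)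
  have hN : G.neighborFinset y = s.erase y := by
    refine Finset.eq_of_superset_of_card_ge hsub ?_
    rw [Finset.card_erase_of_mem hy]
    exact Nat.le_sub_one_of_lt hdeg
  exact Finset.mem_of_mem_erase (hN ▸ (G.mem_neighborFinset y z).2 hyz)

end SimpleGraph

/-- In a cubic graph, two intersecting pairs of adjacent twins produce a
4-clique which is an entire connected component. -/
theorem stmt9 {V : Type} [Fintype V] (G : SimpleGraph V) [DecidableRel G.Adj]
    (hcubic : ∀ x : V, G.degree x = 3) (u v w : V) (huw : u ≠ w)
    (h1 : AdjacentTwins G u v) (h2 : AdjacentTwins G v w) :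
    ∃ x : V, x ∉ ({u, v, w} : Set V) ∧ G.Adj u x ∧ G.Adj v x ∧ G.Adj w x ∧
      G.IsClique {u, v, w, x} ∧
      ∀ y ∈ ({u, v, w, x} : Set V), ∀ z : V, G.Adj y z → z ∈ ({u, v, w, x} : Set V) := by
  classical
  have huv := h1.1
  have hvw := h2.1
  have hadj_uw : G.Adj u w := h1.symm.adj_of_adj hvw huw.symm
  obtain ⟨x, hux, hx⟩ : ∃ x, G.Adj u x ∧ x ∉ ({v, w} : Finset V) :=
    exists_adj_notMem_of_card_lt_degree (Finset.card_le_two.trans_lt (by rw [hcubic]; norm_num))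
  simp only [Finset.mem_insert, Finset.mem_singleton, not_or] at hx
  have hvx := h1.adj_of_adj hux hx.1
  have hwx := h2.adj_of_adj hvx hx.2
  have hclique : G.IsClique (({u, v, w, x} : Finset V) : Set V) := by
    simp [isClique_insert, huv, hadj_uw, hux, hvw, hvx, hwx, huv.ne, huw, hvw.ne, hux.ne, hvx.ne,
      hwx.ne]
  have hcard : ({u, v, w, x} : Finset V).card = 4 := by
    simp [huv.ne, huw, hux.ne, hvw.ne, hvx.ne, hwx.ne]
  refine ⟨x, by simp [hux.ne', hvx.ne', hwx.ne'], hux, hvx, hwx, by simpa using hclique, ?_⟩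
  intro y hy z hyz
  simpa using hclique.mem_of_adj_of_degree_lt (by simpa using hy) (by simp [hcubic, hcard]) hyz
end

section
/- If G is a 3-connected 3-regular simple graph containing two disjoint pairs of nonadjacent twins {v, v'} and {w, w'} such that v and w are adjacent, then G is isomorphic to K_{3,3}. -/
open SimpleGraph

/-! Twins have equal neighbourhoods, so `N(v) = N(v') = {w, w', u}` and
`N(w) = N(w') = {v, v', t}`. A common neighbour of `v` and `w` would be adjacent to all of
`v, v', w, w'`, too many for degree three; so `u` is not adjacent to `w`, nor `t` to `v`. No edge
leaves `{v, v', w, w'}` except towards `{u, t}`, so by 3-connectivity these six vertices are all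
of `G`, and then degree counting forces `N(u) = N(w)` and `N(t) = N(v)`: `G` is complete
bipartite with parts `N(w)` and `N(v)`. -/

namespace SimpleGraph

variable {V : Type*} {G : SimpleGraph V}

theorem Preconnected.eq_univ_of_neighborSet_subset (hG : G.Preconnected) {S : Set V}
    (hS : ∀ a ∈ S, G.neighborSet a ⊆ S) (hne : S.Nonempty) : S = Set.univ := by
  obtain ⟨s, hs⟩ := hne
  refine Set.eq_univ_of_forall fun x => by_contra fun hx => ?_
  obtain ⟨p⟩ := hG s x
  obtain ⟨d, -, hd₁, hd₂⟩ := p.exists_boundary_dart S hs hx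
  exact hd₂ (hS _ hd₁ d.adj)

theorem union_eq_univ_of_preconnected_induce_compl {S K : Set V}
    (hK : (G.induce Kᶜ).Preconnected) (hS : ∀ a ∈ S, G.neighborSet a ⊆ S ∪ K)
    (hSK : ¬ S ⊆ K) : S ∪ K = Set.univ := by
  obtain ⟨s, hsS, hsK⟩ := Set.not_subset.1 hSK
  have hS' : {x : ↥Kᶜ | x.1 ∈ S} = Set.univ := by
    refine hK.eq_univ_of_neighborSet_subset (fun a ha b hab => ?_) ⟨⟨s, hsK⟩, hsS⟩
    exact (hS a.1 ha hab).resolve_right b.2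
  refine Set.eq_univ_of_forall fun x => or_iff_not_imp_right.2 fun hx => ?_
  exact (Set.ext_iff.1 hS' ⟨x, hx⟩).2 trivial

theorem neighborSet_eq_of_subset_of_degree_le [Fintype V] [DecidableRel G.Adj] {x y : V}
    (h : G.neighborSet x ⊆ G.neighborSet y) (hdeg : G.degree y ≤ G.degree x) :
    G.neighborSet x = G.neighborSet y := by
  have hfin : G.neighborFinset x = G.neighborFinset y :=
    Finset.eq_of_subset_of_card_le (by simpa [← coe_neighborFinset] using h)
      (by simpa only [card_neighborFinset_eq_degree] using hdeg)
  rw [← coe_neighborFinset, hfin, coe_neighborFinset]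

theorem exists_neighborSet_eq_of_degree_eq_three [Fintype V] [DecidableRel G.Adj] {x a b : V}
    (hx : G.degree x = 3) (ha : G.Adj x a) (hb : G.Adj x b) (hab : a ≠ b) :
    ∃ c, c ≠ a ∧ c ≠ b ∧ G.neighborSet x = {a, b, c} := by
  classical
  have hsub : {a, b} ⊆ G.neighborFinset x := by
    simp [Finset.insert_subset_iff, ha, hb]
  obtain ⟨c, hc⟩ : ∃ c, G.neighborFinset x \ {a, b} = {c} := by
    rw [← Finset.card_eq_one, Finset.card_sdiff_of_subset hsub, card_neighborFinset_eq_degree,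
      hx, Finset.card_pair hab]
  have hcmem : c ∈ G.neighborFinset x \ {a, b} := hc ▸ Finset.mem_singleton_self c
  simp only [Finset.mem_sdiff, Finset.mem_insert, Finset.mem_singleton, not_or] at hcmem
  refine ⟨c, hcmem.2.1, hcmem.2.2, ?_⟩
  rw [← coe_neighborFinset, ← Finset.union_sdiff_of_subset hsub, hc]
  ext; simp

theorem nonempty_iso_completeBipartiteGraph_of_neighborSet {A B : Set V}
    (hcover : A ∪ B = Set.univ) (hA : ∀ x ∈ A, G.neighborSet x = B)
    (hB : ∀ x ∈ B, G.neighborSet x = A) : Nonempty (G ≃g completeBipartiteGraph A B) := by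
  have hdisj : ∀ x ∈ A, x ∉ B := fun x hxA hxB =>
    G.irrefl (show x ∈ G.neighborSet x by rw [hA x hxA]; exact hxB)
  have hbij : Function.Bijective (Sum.elim ((↑) : A → V) ((↑) : B → V)) := by
    refine ⟨Subtype.val_injective.sumElim Subtype.val_injective
      fun a b h => hdisj a a.2 (h ▸ b.2), fun x => ?_⟩
    rcases Set.eq_univ_iff_forall.1 hcover x with hx | hx
    exacts [⟨.inl ⟨x, hx⟩, rfl⟩, ⟨.inr ⟨x, hx⟩, rfl⟩]
  refine ⟨(RelIso.mk (Equiv.ofBijective _ hbij) ?_).symm⟩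
  rintro (⟨a, ha⟩ | ⟨a, ha⟩) (⟨b, hb⟩ | ⟨b, hb⟩)
  all_goals
    simp only [Equiv.ofBijective_apply, Sum.elim_inl, Sum.elim_inr, completeBipartiteGraph_adj,
      Sum.isLeft_inl, Sum.isLeft_inr, Sum.isRight_inl, Sum.isRight_inr]
    rw [← mem_neighborSet]
  · simpa [hA a ha] using hdisj b hb
  · simpa [hA a ha] using hb
  · simpa [hB a ha] using hb
  · simpa [hB a ha] using fun h => hdisj b h hb

end SimpleGraph

section

variable {V : Type} {G : SimpleGraph V}

theorem ThreeConnected.union_eq_univ_of_neighborSet_subset [Fintype V] (hG : ThreeConnected G)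
    {S K : Set V} (hK : K.ncard < 3) (hS : ∀ a ∈ S, G.neighborSet a ⊆ S ∪ K) (hSK : ¬ S ⊆ K) :
    S ∪ K = Set.univ :=
  union_eq_univ_of_preconnected_induce_compl (hG.2 K hK).preconnected hS hSK

theorem NonadjacentTwins.adj_iff {v v' : V} (h : NonadjacentTwins G v v') (x : V) :
    G.Adj v x ↔ G.Adj v' x := by
  rw [← mem_neighborSet, h.2.2, mem_neighborSet]

theorem NonadjacentTwins.not_adj_of_adj [Fintype V] [DecidableRel G.Adj] {v v' w w' x : V}
    (h₁ : NonadjacentTwins G v v') (h₂ : NonadjacentTwins G w w') (hadj : G.Adj v w)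
    (hx : G.degree x = 3) (hxv : G.Adj x v) : ¬ G.Adj x w := by
  intro hxw
  have hv'w : G.Adj v' w := (h₁.adj_iff w).1 hadj
  have hw'v : G.Adj w' v := (h₂.adj_iff v).1 hadj.symm
  have hw'v' : G.Adj w' v' := (h₂.adj_iff v').1 hv'w.symm
  obtain ⟨c, -, -, hNx⟩ :=
    exists_neighborSet_eq_of_degree_eq_three hx hxv ((h₁.adj_iff x).1 hxv.symm).symm h₁.1
  have hw : w ∈ G.neighborSet x := hxw
  have hw' : w' ∈ G.neighborSet x := ((h₂.adj_iff x).1 hxw.symm).symm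
  rw [hNx] at hw hw'
  simp only [Set.mem_insert_iff, Set.mem_singleton_iff, hadj.ne', hv'w.ne', hw'v.ne, hw'v'.ne,
    false_or] at hw hw'
  exact h₂.1 (hw.trans hw'.symm)

theorem ThreeConnected.neighborSet_union_eq_univ_of_twins [Fintype V] (hG : ThreeConnected G)
    {v v' w w' u t : V} (h₁ : NonadjacentTwins G v v') (h₂ : NonadjacentTwins G w w')
    (hNv : G.neighborSet v = {w, w', u}) (hNw : G.neighborSet w = {v, v', t}) (hvt : v ≠ t) :
    G.neighborSet w ∪ G.neighborSet v = Set.univ := by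
  have hvu : v ≠ u := G.ne_of_adj (show u ∈ G.neighborSet v by simp [hNv])
  have hS : ({v, v', w, w'} : Set V) ∪ {u, t} = G.neighborSet w ∪ G.neighborSet v := by
    ext; simp only [hNv, hNw, Set.mem_insert_iff, Set.mem_singleton_iff, Set.mem_union]; tauto
  rw [← hS]
  refine hG.union_eq_univ_of_neighborSet_subset ((Set.ncard_insert_le _ _).trans_lt ?_) ?_ ?_
  · rw [Set.ncard_singleton]; omega
  · rintro a (rfl | rfl | rfl | rfl)
    all_goals
      first | rw [hNv] | rw [← h₁.2.2, hNv] | rw [hNw] | rw [← h₂.2.2, hNw]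
      intro x hx
      simp only [Set.mem_insert_iff, Set.mem_singleton_iff, Set.mem_union] at hx ⊢
      tauto
  · intro h
    rcases h (Set.mem_insert v _) with h | h
    exacts [hvu h, hvt h]

theorem neighborSet_eq_of_twins [Fintype V] [DecidableRel G.Adj] (hcubic : ∀ x, G.degree x = 3)
    {v v' w w' u : V} (h₁ : NonadjacentTwins G v v') (h₂ : NonadjacentTwins G w w')
    (hadj : G.Adj v w) (hNv : G.neighborSet v = {w, w', u})
    (hcover : G.neighborSet w ∪ G.neighborSet v = Set.univ) :
    G.neighborSet u = G.neighborSet w := by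
  have hwu : ¬ G.Adj u w :=
    h₁.not_adj_of_adj h₂ hadj (hcubic u) (show u ∈ G.neighborSet v by simp [hNv]).symm
  refine neighborSet_eq_of_subset_of_degree_le (fun y (hy : G.Adj u y) => ?_)
    (by rw [hcubic, hcubic])
  refine (Set.eq_univ_iff_forall.1 hcover y).resolve_right ?_
  rw [hNv]
  rintro (rfl | rfl | rfl)
  exacts [hwu hy, hwu ((h₂.adj_iff u).2 hy.symm).symm, G.irrefl hy]

end

theorem stmt19_general {V : Type} [Fintype V] (G : SimpleGraph V) [DecidableRel G.Adj]
    (h3c : ThreeConnected G) (hcubic : ∀ x : V, G.degree x = 3)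
    (v v' w w' : V)
    (h1 : NonadjacentTwins G v v') (h2 : NonadjacentTwins G w w')
    (hadj : G.Adj v w) :
    Nonempty (G ≃g completeBipartiteGraph (Fin 3) (Fin 3)) := by
  obtain ⟨u, -, -, hNv⟩ := exists_neighborSet_eq_of_degree_eq_three (hcubic v) hadj
    ((h2.adj_iff v).1 hadj.symm).symm h2.1
  obtain ⟨t, htv, -, hNw⟩ := exists_neighborSet_eq_of_degree_eq_three (hcubic w) hadj.symm
    ((h1.adj_iff w).1 hadj).symm h1.1
  have hcover := h3c.neighborSet_union_eq_univ_of_twins h1 h2 hNv hNw htv.symm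
  have hNu := neighborSet_eq_of_twins hcubic h1 h2 hadj hNv hcover
  have hNt := neighborSet_eq_of_twins hcubic h2 h1 hadj.symm hNw (Set.union_comm _ _ ▸ hcover)
  obtain ⟨e⟩ := nonempty_iso_completeBipartiteGraph_of_neighborSet hcover
    (fun x hx => by rw [hNw] at hx; rcases hx with rfl | rfl | rfl; exacts [rfl, h1.2.2.symm, hNt])
    (fun x hx => by rw [hNv] at hx; rcases hx with rfl | rfl | rfl; exacts [rfl, h2.2.2.symm, hNu])
  have hcard : ∀ x, Fintype.card (G.neighborSet x) = 3 := fun x => by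
    rw [card_neighborSet_eq_degree, hcubic]
  exact ⟨e.trans (completeBipartiteGraphCongr (Fintype.equivFinOfCardEq (hcard w))
    (Fintype.equivFinOfCardEq (hcard v)))⟩

/-- A 3-connected cubic graph with two disjoint pairs of nonadjacent twins
`{v, v'}`, `{w, w'}` such that `v` and `w` are adjacent is `K_{3,3}`. -/
theorem stmt19 {V : Type} [Fintype V] (G : SimpleGraph V) [DecidableRel G.Adj]
    (h3c : ThreeConnected G) (hcubic : ∀ x : V, G.degree x = 3)
    (v v' w w' : V)
    (h1 : NonadjacentTwins G v v') (h2 : NonadjacentTwins G w w')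
    (hdisj : ({v, v'} : Set V) ∩ {w, w'} = ∅)
    (hadj : G.Adj v w) :
    Nonempty (G ≃g completeBipartiteGraph (Fin 3) (Fin 3)) :=
  stmt19_general G h3c hcubic v v' w w' h1 h2 hadj
end
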